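/- arXiv:2507.10031 — 4 statements merged into one kernel-verified Lean document; each statement's English description precedes it below -/
import Mathlib

section
/- Let x(t) = r(t)s(t) (polar coordinates, r = |x|, s = x/|x|) be a solution of the anisotropic Kepler problem with energy h, and define Γ(t) = ½ r(t)^α (2h - ṙ(t)²). Then Γ̇(t) = -((2-α)/2) r^{α+1} ṙ |ṡ|² for all t in the domain. -/
/-!
Write `r = |x|`, `ṙ = ⟨x, ẋ⟩ / r`. Differentiating once more gives
`r̈ = (⟨x, ẍ⟩ + |ẋ|² - ṙ²) / r`, while `|ẋ|² = ṙ² + r² |ṡ|²`. Along the flow `ẍ = ∇U(x)`,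
Euler's identity `⟨x, ∇U(x)⟩ = -α U(x)` and the energy `2h = |ẋ|² - 2U(x)` make the potential
cancel from `Γ̇ = r^(α-1) ṙ (α (2h - ṙ²) / 2 - r r̈)`, leaving
`Γ̇ = (α/2 - 1) r^(α-1) ṙ (|ẋ|² - ṙ²) = -((2-α)/2) r^(α+1) ṙ |ṡ|²`.
-/

open Real Filter Topology
open scoped RealInnerProductSpace

section Homogeneous

variable {E : Type*} [NormedAddCommGroup E] [NormedSpace ℝ E]

theorem apply_smul_eq_rpow_mul_of_eq_norm_rpow_mul {U : E → ℝ} {α c : ℝ}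
    (hU : ∀ y : E, y ≠ 0 → U y = ‖y‖ ^ (-α) * U (‖y‖⁻¹ • y)) {y : E} (hy : y ≠ 0) (hc : 0 < c) :
    U (c • y) = c ^ (-α) * U y := by
  have hnorm : ‖c • y‖ = c * ‖y‖ := by rw [norm_smul, Real.norm_of_nonneg hc.le]
  have hdir : ‖c • y‖⁻¹ • c • y = ‖y‖⁻¹ • y := by
    rw [hnorm, smul_smul, mul_inv, mul_right_comm, inv_mul_cancel₀ hc.ne', one_mul]
  rw [hU _ (smul_ne_zero hc.ne' hy), hdir, hnorm, mul_rpow hc.le (norm_nonneg y), hU y hy]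
  ring

theorem fderiv_apply_self_of_homogeneous {U : E → ℝ} {k : ℝ} {y : E}
    (hdiff : DifferentiableAt ℝ U y) (hhom : ∀ c : ℝ, 0 < c → U (c • y) = c ^ k * U y) :
    fderiv ℝ U y y = k * U y := by
  have hray : HasDerivAt (fun c : ℝ => U (c • y)) (fderiv ℝ U y y) 1 := by
    have hline : HasDerivAt (fun c : ℝ => c • y) y 1 := by
      simpa using (hasDerivAt_id (1 : ℝ)).smul_const y
    have hU : HasFDerivAt U (fderiv ℝ U y) ((1 : ℝ) • y) := by simpa using hdiff.hasFDerivAt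
    exact hU.comp_hasDerivAt (1 : ℝ) hline
  have hpow : HasDerivAt (fun c : ℝ => c ^ k * U y) (k * U y) 1 := by
    simpa using ((hasDerivAt_rpow_const (Or.inl one_ne_zero)).mul_const (U y) :
      HasDerivAt (fun c : ℝ => c ^ k * U y) (k * 1 ^ (k - 1) * U y) 1)
  have heq : (fun c : ℝ => U (c • y)) =ᶠ[𝓝 1] fun c => c ^ k * U y :=
    eventually_gt_nhds one_pos |>.mono fun c hc => hhom c hc
  exact hray.unique (hpow.congr_of_eventuallyEq heq)

theorem inner_gradient_self_of_homogeneous {F : Type*} [NormedAddCommGroup F]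
    [InnerProductSpace ℝ F] [CompleteSpace F] {U : F → ℝ} {k : ℝ} {y : F}
    (hdiff : DifferentiableAt ℝ U y) (hhom : ∀ c : ℝ, 0 < c → U (c • y) = c ^ k * U y) :
    ⟪y, gradient U y⟫ = k * U y := by
  rw [real_inner_comm, gradient, InnerProductSpace.toDual_symm_apply,
    fderiv_apply_self_of_homogeneous hdiff hhom]

end Homogeneous

section PolarCoordinates

variable {E : Type*} [NormedAddCommGroup E] [InnerProductSpace ℝ E] {x : ℝ → E} {t : ℝ}

theorem HasDerivAt.norm {v : E} (hx : HasDerivAt x v t) (h0 : x t ≠ 0) :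
    HasDerivAt (fun u => ‖x u‖) (⟪x t, v⟫ / ‖x t‖) t := by
  have hr : 0 < ‖x t‖ := norm_pos_iff.mpr h0
  have hsqrt := hx.norm_sq.sqrt (by positivity)
  simp only [sqrt_sq (norm_nonneg _)] at hsqrt
  convert hsqrt using 1
  field_simp

theorem HasDerivAt.norm_inv_smul {v : E} (hx : HasDerivAt x v t) (h0 : x t ≠ 0) :
    HasDerivAt (fun u => ‖x u‖⁻¹ • x u)
      (‖x t‖⁻¹ • v - (⟪x t, v⟫ / ‖x t‖ ^ 3) • x t) t := by
  have hr : ‖x t‖ ≠ 0 := norm_ne_zero_iff.mpr h0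
  refine (((hx.norm h0).inv hr).smul hx).congr_deriv ?_
  simp only [Pi.inv_apply, sub_eq_add_neg, ← neg_smul]
  congr 2
  field_simp

theorem norm_deriv_norm_inv_smul_sq {v : E} (hx : HasDerivAt x v t) (h0 : x t ≠ 0) :
    ‖deriv (fun u => ‖x u‖⁻¹ • x u) t‖ ^ 2
      = (‖v‖ ^ 2 - (⟪x t, v⟫ / ‖x t‖) ^ 2) / ‖x t‖ ^ 2 := by
  have hr : ‖x t‖ ≠ 0 := norm_ne_zero_iff.mpr h0
  rw [(hx.norm_inv_smul h0).deriv, ← real_inner_self_eq_norm_sq]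
  simp only [inner_sub_left, inner_sub_right, real_inner_smul_left, real_inner_smul_right,
    real_inner_comm v (x t)]
  simp only [real_inner_self_eq_norm_sq]
  field_simp
  ring

-- When `v = ẋ`, the function `⟪x, v⟫ / ‖x‖` is `ṙ`, so this computes the radial acceleration.
theorem HasDerivAt.inner_div_norm {v : ℝ → E} {a : E} (hx : HasDerivAt x (v t) t) (hv : HasDerivAt v a t)
    (h0 : x t ≠ 0) :
    HasDerivAt (fun u => ⟪x u, v u⟫ / ‖x u‖)
      ((⟪x t, a⟫ + ‖v t‖ ^ 2 - (⟪x t, v t⟫ / ‖x t‖) ^ 2) / ‖x t‖) t := by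
  have hr : ‖x t‖ ≠ 0 := norm_ne_zero_iff.mpr h0
  refine ((hx.inner ℝ hv).div (hx.norm h0) hr).congr_deriv ?_
  rw [real_inner_self_eq_norm_sq]
  field_simp

end PolarCoordinates

theorem Gamma_deriv_general {d : ℕ} (α h Tm Tp : ℝ)
    (U : EuclideanSpace ℝ (Fin d) → ℝ)
    (hUhom : ∀ y : EuclideanSpace ℝ (Fin d), y ≠ 0 →
      U y = ‖y‖ ^ (-α) * U (‖y‖⁻¹ • y))
    (hUC2 : ContDiffOn ℝ 2 U {y : EuclideanSpace ℝ (Fin d) | y ≠ 0})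
    (x x' : ℝ → EuclideanSpace ℝ (Fin d))
    (hx0 : ∀ t ∈ Set.Ioo Tm Tp, x t ≠ 0)
    (hx1 : ∀ t ∈ Set.Ioo Tm Tp, HasDerivAt x (x' t) t)
    (hx2 : ∀ t ∈ Set.Ioo Tm Tp, HasDerivAt x' (gradient U (x t)) t)
    (hE : ∀ t ∈ Set.Ioo Tm Tp, (1/2) * ‖x' t‖^2 - U (x t) = h) :
    ∀ t ∈ Set.Ioo Tm Tp,
      deriv (fun τ => (1/2) * ‖x τ‖ ^ α *
          (2*h - (deriv (fun u => ‖x u‖) τ)^2)) t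
        = -((2-α)/2) * ‖x t‖ ^ (α+1) * deriv (fun u => ‖x u‖) t *
            ‖deriv (fun u => ‖x u‖⁻¹ • x u) t‖^2 := by
  intro t ht
  have hr : ‖x t‖ ≠ 0 := norm_ne_zero_iff.mpr (hx0 t ht)
  have hrdot : deriv (fun u => ‖x u‖) =ᶠ[𝓝 t] fun τ => ⟪x τ, x' τ⟫ / ‖x τ‖ :=
    eventually_of_mem (isOpen_Ioo.mem_nhds ht) fun τ hτ => ((hx1 τ hτ).norm (hx0 τ hτ)).deriv
  have hΓ : HasDerivAt (fun τ => (1/2) * ‖x τ‖ ^ α * (2*h - (⟪x τ, x' τ⟫ / ‖x τ‖)^2)) _ t :=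
    (((hx1 t ht).norm (hx0 t ht)).rpow_const (p := α) (Or.inl hr)).const_mul (1 / 2)
    |>.mul (((hx1 t ht).inner_div_norm (hx2 t ht) (hx0 t ht)).pow 2 |>.const_sub (2 * h))
  have heuler : ⟪x t, gradient U (x t)⟫ = -α * U (x t) :=
    inner_gradient_self_of_homogeneous
      ((hUC2.contDiffAt (isOpen_ne.mem_nhds (hx0 t ht))).differentiableAt two_ne_zero)
      fun c hc => apply_smul_eq_rpow_mul_of_eq_norm_rpow_mul hUhom (hx0 t ht) hc
  have hΓeq : (fun τ => (1/2) * ‖x τ‖ ^ α * (2*h - (deriv (fun u => ‖x u‖) τ)^2))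
      =ᶠ[𝓝 t] fun τ => (1/2) * ‖x τ‖ ^ α * (2*h - (⟪x τ, x' τ⟫ / ‖x τ‖)^2) :=
    hrdot.mono fun τ hτ => by simp only [hτ]
  rw [hΓeq.deriv_eq, hΓ.deriv, ((hx1 t ht).norm (hx0 t ht)).deriv,
    norm_deriv_norm_inv_smul_sq (hx1 t ht) (hx0 t ht), heuler, rpow_sub_one hr, rpow_add_one hr,
    ← hE t ht]
  simp only [Nat.cast_ofNat, Nat.add_one_sub_one, pow_one]
  field_simp
  ring

/-- For `Γ(t) = ½ r(t)^α (2h - ṙ(t)²)` along a solution of the anisotropic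
Kepler problem one has `Γ̇ = -((2-α)/2) r^{α+1} ṙ |ṡ|²`. -/
theorem Gamma_deriv {d : ℕ} (hd : 2 ≤ d) (α h Tm Tp : ℝ)
    (hα : α ∈ Set.Ioo (0:ℝ) 2)
    (U : EuclideanSpace ℝ (Fin d) → ℝ)
    (hUhom : ∀ y : EuclideanSpace ℝ (Fin d), y ≠ 0 →
      U y = ‖y‖ ^ (-α) * U (‖y‖⁻¹ • y))
    (hUC2 : ContDiffOn ℝ 2 U {y : EuclideanSpace ℝ (Fin d) | y ≠ 0})
    (hUpos : ∀ y : EuclideanSpace ℝ (Fin d), ‖y‖ = 1 → 0 < U y)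
    (x x' : ℝ → EuclideanSpace ℝ (Fin d))
    (hx0 : ∀ t ∈ Set.Ioo Tm Tp, x t ≠ 0)
    (hx1 : ∀ t ∈ Set.Ioo Tm Tp, HasDerivAt x (x' t) t)
    (hx2 : ∀ t ∈ Set.Ioo Tm Tp, HasDerivAt x' (gradient U (x t)) t)
    (hE : ∀ t ∈ Set.Ioo Tm Tp, (1/2) * ‖x' t‖^2 - U (x t) = h) :
    ∀ t ∈ Set.Ioo Tm Tp,
      deriv (fun τ => (1/2) * ‖x τ‖ ^ α *
          (2*h - (deriv (fun u => ‖x u‖) τ)^2)) t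
        = -((2-α)/2) * ‖x t‖ ^ (α+1) * deriv (fun u => ‖x u‖) t *
            ‖deriv (fun u => ‖x u‖⁻¹ • x u) t‖^2 :=
  Gamma_deriv_general α h Tm Tp U hUhom hUC2 x x' hx0 hx1 hx2 hE
end

section
/- Let x(t) = r(t)s(t) be a positive h-energy solution of the anisotropic Kepler problem defined on (T⁻, T⁺), and suppose İ(t₀) = (d/dt)|x(t)|²|_{t=t₀} ≥ 0 for some t₀. Then for all t₀ < t₁ < t₂ < T⁺, ∫_{t₁}^{t₂} |ṡ(t)| dt ≤ (2/α) · √(2h r(t₀)^α + 2U_max) / (2h)^{(2+α)/4} · (t₁ - t₀)^{-α/2}, where U_max = max{U(s) : s ∈ S^{d-1}}. -/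
/-!
Write `r = ‖x‖`, `s = x / r`. The Lagrange–Jacobi identity `Ï / 2 = 2h + (2 - α) U(x) ≥ 2h`,
started from `İ(t₀) ≥ 0`, gives `⟪x, ẋ⟫ ≥ 2h (t - t₀)` and `r² ≥ 2h (t - t₀)²`. In particular
`ṙ ≥ 0`, which makes `Γ = ½ r^{2+α} |ṡ|² - U(s)` non-increasing, so
`r^{2+α} |ṡ|² = 2Γ + 2U(s) ≤ 2h r(t₀)^α + 2 U_max`. Together with the lower bound on `r` this
gives `|ṡ| ≤ C (t - t₀)^{-(1 + α/2)}`, whose integral over `[t₁, t₂]` is at most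
`(2/α) C (t₁ - t₀)^{-α/2}`.
-/

open Real Set
open scoped RealInnerProductSpace

section Homogeneous

variable {E : Type*} [NormedAddCommGroup E] [NormedSpace ℝ E] {U : E → ℝ} {α : ℝ} {y : E}

lemma HasFDerivAt.apply_self_of_homogeneous {L : E →L[ℝ] ℝ} (hL : HasFDerivAt U L y)
    (hhom : ∀ c : ℝ, 0 < c → U (c • y) = c ^ (-α) * U y) : L y = -α * U y := by
  have hray : HasDerivAt (fun c : ℝ => U (c • y)) (L y) 1 := by
    have hline : HasDerivAt (fun c : ℝ => c • y) y 1 := by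
      simpa using (hasDerivAt_id (1 : ℝ)).smul_const y
    exact (one_smul ℝ y ▸ hL).comp_hasDerivAt 1 hline
  have hpow : HasDerivAt (fun c : ℝ => U (c • y)) (-α * U y) 1 := by
    refine HasDerivAt.congr_of_eventuallyEq ?_ <|
      (eventually_gt_nhds one_pos).mono fun c hc => hhom c hc
    simpa using (hasDerivAt_rpow_const (p := -α) (Or.inl one_ne_zero)).mul_const (U y)
  exact hray.unique hpow

variable (hU : ∀ y : E, y ≠ 0 → U y = ‖y‖ ^ (-α) * U (‖y‖⁻¹ • y))
include hU

lemma apply_smul_of_eq_norm_rpow_mul (hy : y ≠ 0) {c : ℝ} (hc : 0 < c) :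
    U (c • y) = c ^ (-α) * U y := by
  have hnorm : ‖c • y‖ = c * ‖y‖ := by rw [norm_smul, norm_of_nonneg hc.le]
  have hdir : (c * ‖y‖)⁻¹ • c • y = ‖y‖⁻¹ • y := by
    rw [smul_smul, mul_inv_rev, mul_assoc, inv_mul_cancel₀ hc.ne', mul_one]
  rw [hU _ (smul_ne_zero hc.ne' hy), hnorm, hdir, mul_rpow hc.le (norm_nonneg y), hU y hy,
    mul_assoc]

lemma apply_inv_norm_smul_of_eq_norm_rpow_mul (hy : y ≠ 0) :
    U (‖y‖⁻¹ • y) = ‖y‖ ^ α * U y := by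
  rw [hU y hy, ← mul_assoc, ← rpow_add (norm_pos_iff.2 hy), add_neg_cancel, rpow_zero, one_mul]

lemma pos_of_eq_norm_rpow_mul (hpos : ∀ y : E, ‖y‖ = 1 → 0 < U y) (hy : y ≠ 0) : 0 < U y := by
  rw [hU y hy]
  exact mul_pos (rpow_pos_of_pos (norm_pos_iff.2 hy) _) (hpos _ (norm_smul_inv_norm hy))

end Homogeneous

lemma inner_gradient_of_eq_norm_rpow_mul {F : Type*} [NormedAddCommGroup F]
    [InnerProductSpace ℝ F] [CompleteSpace F] {U : F → ℝ} {α : ℝ} {y : F}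
    (hU : ∀ y : F, y ≠ 0 → U y = ‖y‖ ^ (-α) * U (‖y‖⁻¹ • y)) (hdiff : DifferentiableAt ℝ U y)
    (hy : y ≠ 0) : ⟪y, gradient U y⟫ = -α * U y := by
  rw [real_inner_comm, ← InnerProductSpace.toDual_apply_apply]
  exact hdiff.hasGradientAt.hasFDerivAt.apply_self_of_homogeneous
    fun c hc => apply_smul_of_eq_norm_rpow_mul hU hy hc

section Kinematics

variable {F : Type*} [NormedAddCommGroup F] [InnerProductSpace ℝ F] {x : ℝ → F} {v : F} {t : ℝ}

lemma HasDerivAt.norm_of_ne_zero (hx : HasDerivAt x v t) (h0 : x t ≠ 0) :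
    HasDerivAt (fun τ => ‖x τ‖) (⟪x t, v⟫ / ‖x t‖) t := by
  have hr : 0 < ‖x t‖ := norm_pos_iff.2 h0
  have hsqrt := (hasDerivAt_sqrt (pow_pos hr 2).ne').comp t hx.norm_sq
  simp only [Function.comp_def, sqrt_sq (norm_nonneg _)] at hsqrt
  refine hsqrt.congr_deriv ?_
  field_simp

lemma HasDerivAt.inv_norm_smul (hx : HasDerivAt x v t) (h0 : x t ≠ 0) :
    HasDerivAt (fun τ => ‖x τ‖⁻¹ • x τ) (‖x t‖⁻¹ • v - (⟪x t, v⟫ / ‖x t‖ ^ 3) • x t) t := by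
  refine (((hx.norm_of_ne_zero h0).inv (norm_ne_zero_iff.2 h0)).smul hx).congr_deriv ?_
  rw [Pi.inv_apply, sub_eq_add_neg, ← neg_smul]
  congr 2
  field_simp

/-- The decomposition `|ẋ|² = ṙ² + r²|ṡ|²` of the velocity into radial and angular parts. -/
lemma norm_sq_mul_norm_sq_inv_norm_smul_deriv {y : F} (hy : y ≠ 0) (v : F) :
    ‖y‖ ^ 2 * ‖‖y‖⁻¹ • v - (⟪y, v⟫ / ‖y‖ ^ 3) • y‖ ^ 2 = ‖v‖ ^ 2 - (⟪y, v⟫ / ‖y‖) ^ 2 := by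
  have hr : ‖y‖ ≠ 0 := norm_ne_zero_iff.2 hy
  rw [norm_sub_sq_real, norm_smul, norm_smul, real_inner_smul_left, real_inner_smul_right,
    real_inner_comm]
  simp only [norm_inv, Real.norm_eq_abs, abs_div, abs_pow, abs_norm, div_pow, mul_pow, sq_abs]
  field_simp
  ring

lemma sq_inner_div_norm_le (y v : F) : (⟪y, v⟫ / ‖y‖) ^ 2 ≤ ‖v‖ ^ 2 := by
  rw [← sq_abs, abs_div, abs_norm]
  gcongr
  exact div_le_of_le_mul₀ (norm_nonneg _) (norm_nonneg _)
    ((abs_real_inner_le_norm y v).trans_eq (mul_comm _ _))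

end Kinematics

lemma le_of_hasDerivAt_nonneg {f f' : ℝ → ℝ} {a b : ℝ} (hab : a ≤ b)
    (hf : ∀ t ∈ Icc a b, HasDerivAt f (f' t) t) (hf' : ∀ t ∈ Ioo a b, 0 ≤ f' t) : f a ≤ f b := by
  refine monotoneOn_of_hasDerivWithinAt_nonneg (convex_Icc a b)
    (fun t ht => (hf t ht).continuousAt.continuousWithinAt) ?_ (by rwa [interior_Icc])
    (left_mem_Icc.2 hab) (right_mem_Icc.2 hab) hab
  rw [interior_Icc]
  exact fun t ht => (hf t (Ioo_subset_Icc_self ht)).hasDerivWithinAt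

lemma le_sqrt_mul_rpow_neg_of_sq_mul_rpow_le {v r b q p : ℝ} (hb : 0 < b)
    (hbr : b ≤ r) (hp : 0 ≤ p) (h : v ^ 2 * r ^ p ≤ q) : v ≤ √q * b ^ (-(p / 2)) := by
  have hr : 0 < r := hb.trans_le hbr
  have hvr : v * r ^ (p / 2) ≤ √q := by
    refine le_sqrt_of_sq_le (h.trans_eq' ?_)
    rw [mul_pow, ← rpow_natCast (r ^ (p / 2)), ← rpow_mul hr.le]
    norm_num
  calc v = v * r ^ (p / 2) * r ^ (-(p / 2)) := by
        rw [mul_assoc, ← rpow_add hr, add_neg_cancel, rpow_zero, mul_one]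
    _ ≤ √q * r ^ (-(p / 2)) := by gcongr
    _ ≤ √q * b ^ (-(p / 2)) :=
        mul_le_mul_of_nonneg_left (rpow_le_rpow_of_nonpos hb hbr (by linarith)) (sqrt_nonneg q)

lemma integral_le_of_le_mul_sub_rpow {f : ℝ → ℝ} {C β t₀ t₁ t₂ : ℝ} (hC : 0 ≤ C) (hβ : 0 < β)
    (h₀₁ : t₀ < t₁) (h₁₂ : t₁ ≤ t₂) (hf₀ : ∀ t ∈ Ioc t₁ t₂, 0 ≤ f t)
    (hf : ∀ t ∈ Ioc t₁ t₂, f t ≤ C * (t - t₀) ^ (-(β + 1))) :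
    ∫ t in t₁..t₂, f t ≤ C * ((t₁ - t₀) ^ (-β) / β) := by
  have hint : IntervalIntegrable (fun t => C * (t - t₀) ^ (-(β + 1)))
      MeasureTheory.volume t₁ t₂ := by
    refine ContinuousOn.intervalIntegrable (continuousOn_const.mul ?_)
    refine (continuousOn_id.sub continuousOn_const).rpow_const fun t ht => Or.inl ?_
    rw [uIcc_of_le h₁₂] at ht
    exact sub_ne_zero.2 (h₀₁.trans_le ht.1).ne'
  have h0 : (0 : ℝ) ∉ uIcc (t₁ - t₀) (t₂ - t₀) := by
    rw [uIcc_of_le (by linarith)]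
    exact fun h => (sub_pos.2 h₀₁).not_ge h.1
  calc ∫ t in t₁..t₂, f t ≤ ∫ t in t₁..t₂, C * (t - t₀) ^ (-(β + 1)) := by
        rw [intervalIntegral.integral_of_le h₁₂, intervalIntegral.integral_of_le h₁₂]
        exact MeasureTheory.setIntegral_mono_of_nonneg hf₀ hf hint.1
    _ = C * (((t₁ - t₀) ^ (-β) - (t₂ - t₀) ^ (-β)) / β) := by
        rw [intervalIntegral.integral_const_mul,
          intervalIntegral.integral_comp_sub_right (fun t => t ^ (-(β + 1))),
          integral_rpow (Or.inr ⟨by linarith, h0⟩), show -(β + 1) + 1 = -β by ring]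
        ring
    _ ≤ C * ((t₁ - t₀) ^ (-β) / β) := by
        gcongr
        exact sub_le_self _ (rpow_nonneg (by linarith : (0 : ℝ) ≤ t₂ - t₀) _)

section Kepler

variable {F : Type*} [NormedAddCommGroup F] [InnerProductSpace ℝ F] [CompleteSpace F]

structure IsKeplerSolution (U : F → ℝ) (h : ℝ) (x x' : ℝ → F) (J : Set ℝ) : Prop where
  ne_zero : ∀ t ∈ J, x t ≠ 0
  hasDerivAt : ∀ t ∈ J, HasDerivAt x (x' t) t
  hasDerivAt_velocity : ∀ t ∈ J, HasDerivAt x' (gradient U (x t)) t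
  energy : ∀ t ∈ J, 1 / 2 * ‖x' t‖ ^ 2 - U (x t) = h

/-- The paper's `Γ = ½ r^{2+α}|ṡ|² - U(s)`, rewritten through the energy identity in terms of
`r = ‖x‖` and `ṙ = ⟪x, ẋ⟫ / ‖x‖`. -/
noncomputable def angularEnergy (α h : ℝ) (x x' : ℝ → F) (t : ℝ) : ℝ :=
  ‖x t‖ ^ α * (h - (⟪x t, x' t⟫ / ‖x t‖) ^ 2 / 2)

namespace IsKeplerSolution

variable {U : F → ℝ} {α h : ℝ} {x x' : ℝ → F} {J : Set ℝ} {t₀ t : ℝ}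
  (hx : IsKeplerSolution U h x x' J) (hEuler : ∀ y : F, y ≠ 0 → ⟪y, gradient U y⟫ = -α * U y)
include hx hEuler

/-- The Lagrange–Jacobi identity `Ï / 2 = 2h + (2 - α) U(x)`. -/
lemma hasDerivAt_inner (ht : t ∈ J) :
    HasDerivAt (fun τ => ⟪x τ, x' τ⟫) (2 * h + (2 - α) * U (x t)) t := by
  refine ((hx.hasDerivAt t ht).inner ℝ (hx.hasDerivAt_velocity t ht)).congr_deriv ?_
  rw [hEuler _ (hx.ne_zero t ht), real_inner_self_eq_norm_sq]
  linarith [hx.energy t ht]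

lemma hasDerivAt_angularEnergy (ht : t ∈ J) :
    HasDerivAt (angularEnergy α h x x') ((2 - α) * ‖x t‖ ^ (α - 1) * (⟪x t, x' t⟫ / ‖x t‖) *
      ((⟪x t, x' t⟫ / ‖x t‖) ^ 2 - ‖x' t‖ ^ 2) / 2) t := by
  have hr : 0 < ‖x t‖ := norm_pos_iff.2 (hx.ne_zero t ht)
  have hnorm := (hx.hasDerivAt t ht).norm_of_ne_zero (hx.ne_zero t ht)
  have hradial := (hx.hasDerivAt_inner hEuler ht).div hnorm hr.ne'
  have hΓ := (hnorm.rpow_const (p := α) (Or.inl hr.ne')).mul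
    ((hasDerivAt_const t h).sub ((hradial.pow 2).div_const 2))
  refine hΓ.congr_deriv ?_
  have hUx : U (x t) = ‖x' t‖ ^ 2 / 2 - h := by linarith [hx.energy t ht]
  simp only [Pi.sub_apply, Pi.div_apply, Pi.pow_apply]
  rw [rpow_sub hr, rpow_one, hUx]
  norm_num
  field_simp
  ring

variable (hα : α ≤ 2) (hUnonneg : ∀ y : F, y ≠ 0 → 0 ≤ U y) (hJ : Icc t₀ t ⊆ J)
  (h₀ : 0 ≤ ⟪x t₀, x' t₀⟫)
include hα hUnonneg hJ h₀

lemma two_mul_mul_sub_le_inner (ht : t₀ ≤ t) : 2 * h * (t - t₀) ≤ ⟪x t, x' t⟫ := by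
  have hmono := le_of_hasDerivAt_nonneg ht
    (f := fun τ => ⟪x τ, x' τ⟫ - 2 * h * (τ - t₀))
    (fun τ hτ => (hx.hasDerivAt_inner hEuler (hJ hτ)).sub
      (((hasDerivAt_id τ).sub_const t₀).const_mul (2 * h)))
    (fun τ hτ => by
      have := mul_nonneg (sub_nonneg.2 hα) (hUnonneg _ (hx.ne_zero τ (hJ (Ioo_subset_Icc_self hτ))))
      linarith)
  simp only [sub_self, mul_zero, sub_zero] at hmono
  linarith

lemma two_mul_mul_sq_le_norm_sq (ht : t₀ ≤ t) : 2 * h * (t - t₀) ^ 2 ≤ ‖x t‖ ^ 2 := by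
  have hmono := le_of_hasDerivAt_nonneg ht
    (f := fun τ => ‖x τ‖ ^ 2 - 2 * h * (τ - t₀) ^ 2)
    (fun τ hτ => (hx.hasDerivAt τ (hJ hτ)).norm_sq.sub
      ((((hasDerivAt_id τ).sub_const t₀).pow 2).const_mul (2 * h)))
    (fun τ hτ => by
      have := hx.two_mul_mul_sub_le_inner hEuler hα hUnonneg
        ((Icc_subset_Icc_right hτ.2.le).trans hJ) h₀ hτ.1.le
      norm_num
      linarith)
  simp only [sub_self] at hmono
  nlinarith [sq_nonneg ‖x t₀‖]

lemma angularEnergy_le (hh : 0 ≤ h) (ht : t₀ ≤ t) :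
    angularEnergy α h x x' t ≤ h * ‖x t₀‖ ^ α := by
  have hmono := le_of_hasDerivAt_nonneg ht (f := fun τ => -angularEnergy α h x x' τ)
    (fun τ hτ => (hx.hasDerivAt_angularEnergy hEuler (hJ hτ)).neg)
    (fun τ hτ => by
      have hr := norm_pos_iff.2 (hx.ne_zero τ (hJ (Ioo_subset_Icc_self hτ)))
      have hinner := hx.two_mul_mul_sub_le_inner hEuler hα hUnonneg
        ((Icc_subset_Icc_right hτ.2.le).trans hJ) h₀ hτ.1.le
      have hradial : 0 ≤ ⟪x τ, x' τ⟫ / ‖x τ‖ :=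
        div_nonneg ((mul_nonneg (by positivity) (sub_nonneg.2 hτ.1.le)).trans hinner) hr.le
      have hcs := sq_inner_div_norm_le (x τ) (x' τ)
      have := mul_nonneg (mul_nonneg (mul_nonneg (sub_nonneg.2 hα) (rpow_nonneg hr.le (α - 1)))
        hradial) (sub_nonneg.2 hcs)
      linarith)
  have hΓ₀ : angularEnergy α h x x' t₀ ≤ h * ‖x t₀‖ ^ α := by
    have := rpow_nonneg (norm_nonneg (x t₀)) α
    unfold angularEnergy
    nlinarith [sq_nonneg (⟪x t₀, x' t₀⟫ / ‖x t₀‖)]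
  linarith

lemma sq_norm_deriv_inv_norm_smul_mul_rpow_le (hh : 0 ≤ h)
    (hUhom : ∀ y : F, y ≠ 0 → U y = ‖y‖ ^ (-α) * U (‖y‖⁻¹ • y)) {Umax : ℝ}
    (hUmax : ∀ y : F, ‖y‖ = 1 → U y ≤ Umax) (ht : t₀ ≤ t) :
    ‖deriv (fun τ => ‖x τ‖⁻¹ • x τ) t‖ ^ 2 * ‖x t‖ ^ (2 + α) ≤
      2 * h * ‖x t₀‖ ^ α + 2 * Umax := by
  have h0 := hx.ne_zero t (hJ (right_mem_Icc.2 ht))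
  have hr := norm_pos_iff.2 h0
  have hangular : ‖deriv (fun τ => ‖x τ‖⁻¹ • x τ) t‖ ^ 2 * ‖x t‖ ^ (2 + α) =
      2 * angularEnergy α h x x' t + 2 * U (‖x t‖⁻¹ • x t) := by
    rw [((hx.hasDerivAt t (hJ (right_mem_Icc.2 ht))).inv_norm_smul h0).deriv, rpow_add hr,
      rpow_two, ← mul_assoc, mul_comm _ (‖x t‖ ^ 2), norm_sq_mul_norm_sq_inv_norm_smul_deriv h0,
      apply_inv_norm_smul_of_eq_norm_rpow_mul hUhom h0, angularEnergy]
    linear_combination 2 * ‖x t‖ ^ α * hx.energy t (hJ (right_mem_Icc.2 ht))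
  rw [hangular]
  linarith [hx.angularEnergy_le hEuler hα hUnonneg hJ h₀ hh ht,
    hUmax (‖x t‖⁻¹ • x t) (norm_smul_inv_norm h0)]

lemma norm_deriv_inv_norm_smul_le (hα' : -2 ≤ α) (hh : 0 < h)
    (hUhom : ∀ y : F, y ≠ 0 → U y = ‖y‖ ^ (-α) * U (‖y‖⁻¹ • y)) {Umax : ℝ}
    (hUmax : ∀ y : F, ‖y‖ = 1 → U y ≤ Umax) (ht : t₀ < t) :
    ‖deriv (fun τ => ‖x τ‖⁻¹ • x τ) t‖ ≤
      √(2 * h * ‖x t₀‖ ^ α + 2 * Umax) / (2 * h) ^ ((2 + α) / 4) * (t - t₀) ^ (-(α / 2 + 1)) := by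
  have hτ : 0 < t - t₀ := sub_pos.2 ht
  have hsq := hx.two_mul_mul_sq_le_norm_sq hEuler hα hUnonneg hJ h₀ ht.le
  have hr : √(2 * h) * (t - t₀) ≤ ‖x t‖ := by
    refine (pow_le_pow_iff_left₀ (by positivity) (norm_nonneg _) two_ne_zero).1 ?_
    rwa [mul_pow, sq_sqrt (by positivity)]
  have hangular :=
    hx.sq_norm_deriv_inv_norm_smul_mul_rpow_le hEuler hα hUnonneg hJ h₀ hh.le hUhom hUmax ht.le
  refine (le_sqrt_mul_rpow_neg_of_sq_mul_rpow_le (by positivity) hr (by linarith)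
    hangular).trans_eq ?_
  rw [mul_rpow (sqrt_nonneg _) hτ.le, sqrt_eq_rpow (2 * h), ← rpow_mul (by positivity),
    show 1 / 2 * -((2 + α) / 2) = -((2 + α) / 4) by ring, rpow_neg (by positivity),
    show -((2 + α) / 2) = -(α / 2 + 1) by ring]
  ring

end IsKeplerSolution

end Kepler

theorem angular_velocity_integral_bound_general {d : ℕ}
    (α h Tm Tp t₀ Umax : ℝ)
    (hα : α ∈ Set.Ioo (0:ℝ) 2) (hh : 0 < h)
    (U : EuclideanSpace ℝ (Fin d) → ℝ)
    (hUhom : ∀ y : EuclideanSpace ℝ (Fin d), y ≠ 0 →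
      U y = ‖y‖ ^ (-α) * U (‖y‖⁻¹ • y))
    (hUC2 : ContDiffOn ℝ 2 U {y : EuclideanSpace ℝ (Fin d) | y ≠ 0})
    (hUpos : ∀ y : EuclideanSpace ℝ (Fin d), ‖y‖ = 1 → 0 < U y)
    (hUmax : IsGreatest (U '' {y : EuclideanSpace ℝ (Fin d) | ‖y‖ = 1}) Umax)
    (x x' : ℝ → EuclideanSpace ℝ (Fin d))
    (hx0 : ∀ t ∈ Set.Ioo Tm Tp, x t ≠ 0)
    (hx1 : ∀ t ∈ Set.Ioo Tm Tp, HasDerivAt x (x' t) t)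
    (hx2 : ∀ t ∈ Set.Ioo Tm Tp, HasDerivAt x' (gradient U (x t)) t)
    (hE : ∀ t ∈ Set.Ioo Tm Tp, (1/2) * ‖x' t‖^2 - U (x t) = h)
    (ht₀ : t₀ ∈ Set.Ioo Tm Tp)
    (hI : 0 ≤ deriv (fun τ => ‖x τ‖^2) t₀) :
    ∀ t₁ t₂ : ℝ, t₀ < t₁ → t₁ < t₂ → t₂ < Tp →
      (∫ t in t₁..t₂, ‖deriv (fun u => ‖x u‖⁻¹ • x u) t‖)
        ≤ (2/α) * Real.sqrt (2*h*‖x t₀‖ ^ α + 2*Umax) / (2*h) ^ ((2+α)/4)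
            * (t₁ - t₀) ^ (-(α/2)) := by
  intro t₁ t₂ h₀₁ h₁₂ h₂
  obtain ⟨hα₀, hα₂⟩ := hα
  have hsol : IsKeplerSolution U h x x' (Ioo Tm Tp) := ⟨hx0, hx1, hx2, hE⟩
  have hEuler (y : EuclideanSpace ℝ (Fin d)) (hy : y ≠ 0) : ⟪y, gradient U y⟫ = -α * U y :=
    inner_gradient_of_eq_norm_rpow_mul hUhom
      ((hUC2.differentiableOn two_ne_zero).differentiableAt (isOpen_ne.mem_nhds hy)) hy
  have hinner₀ : 0 ≤ ⟪x t₀, x' t₀⟫ := by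
    rw [(hx1 t₀ ht₀).norm_sq.deriv] at hI
    linarith
  have hbound (t : ℝ) (ht : t ∈ Ioc t₁ t₂) := hsol.norm_deriv_inv_norm_smul_le hEuler hα₂.le
    (fun y hy => (pos_of_eq_norm_rpow_mul hUhom hUpos hy).le)
    (Icc_subset_Ioo ht₀.1 (ht.2.trans_lt h₂)) hinner₀ (by linarith) hh hUhom
    (fun y hy => hUmax.2 ⟨y, hy, rfl⟩) (h₀₁.trans_le ht.1.le)
  refine (integral_le_of_le_mul_sub_rpow (by positivity) (half_pos hα₀) h₀₁ h₁₂.le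
    (fun _ _ => norm_nonneg _) hbound).trans_eq ?_
  field_simp

/-- Integral bound on the angular velocity of a positive-energy solution of the
anisotropic Kepler problem, when `İ(t₀) ≥ 0`. -/
theorem angular_velocity_integral_bound {d : ℕ} (hd : 2 ≤ d)
    (α h Tm Tp t₀ Umax : ℝ)
    (hα : α ∈ Set.Ioo (0:ℝ) 2) (hh : 0 < h)
    (U : EuclideanSpace ℝ (Fin d) → ℝ)
    (hUhom : ∀ y : EuclideanSpace ℝ (Fin d), y ≠ 0 →
      U y = ‖y‖ ^ (-α) * U (‖y‖⁻¹ • y))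
    (hUC2 : ContDiffOn ℝ 2 U {y : EuclideanSpace ℝ (Fin d) | y ≠ 0})
    (hUpos : ∀ y : EuclideanSpace ℝ (Fin d), ‖y‖ = 1 → 0 < U y)
    (hUmax : IsGreatest (U '' {y : EuclideanSpace ℝ (Fin d) | ‖y‖ = 1}) Umax)
    (x x' : ℝ → EuclideanSpace ℝ (Fin d))
    (hx0 : ∀ t ∈ Set.Ioo Tm Tp, x t ≠ 0)
    (hx1 : ∀ t ∈ Set.Ioo Tm Tp, HasDerivAt x (x' t) t)
    (hx2 : ∀ t ∈ Set.Ioo Tm Tp, HasDerivAt x' (gradient U (x t)) t)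
    (hE : ∀ t ∈ Set.Ioo Tm Tp, (1/2) * ‖x' t‖^2 - U (x t) = h)
    (ht₀ : t₀ ∈ Set.Ioo Tm Tp)
    (hI : 0 ≤ deriv (fun τ => ‖x τ‖^2) t₀) :
    ∀ t₁ t₂ : ℝ, t₀ < t₁ → t₁ < t₂ → t₂ < Tp →
      (∫ t in t₁..t₂, ‖deriv (fun u => ‖x u‖⁻¹ • x u) t‖)
        ≤ (2/α) * Real.sqrt (2*h*‖x t₀‖ ^ α + 2*Umax) / (2*h) ^ ((2+α)/4)
            * (t₁ - t₀) ^ (-(α/2)) :=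
  angular_velocity_integral_bound_general α h Tm Tp t₀ Umax hα hh U hUhom hUC2 hUpos hUmax x x' hx0
    hx1 hx2 hE ht₀ hI
end

section
/- Let x(t) = r(t)s(t) be a positive h-energy solution of the anisotropic Kepler problem defined for all t ∈ [t₀, ∞). Then r(t)/t → √(2h), ṙ(t) → √(2h), and İ(t)/(2t) → 2h as t → ∞. -/
/-!
Write `I = ‖x‖²` and `v = ⟪x, ẋ⟫ = İ/2`. Euler's identity `⟪∇U(y), y⟫ = -α U(y)` together with
the energy relation gives `v̇ = 2h + (2 - α) U(x) ≥ 2h`, so `v` and then `I` grow to infinity.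
Homogeneity of degree `-α` makes `U(x) → 0` once `‖x‖ → ∞`, hence `v̇ → 2h`. L'Hôpital's rule
(`∞/∞`) gives first `v/t → 2h` and then `I/t² → 2h`; the three limits follow since
`‖x‖/t = √(I/t²)` and `ṙ = v/r = (v/t)/(r/t)`.
-/

open Real Set Filter Topology InnerProductSpace Bornology Metric

section RealCalculus

variable {f g f' g' : ℝ → ℝ}

lemma eventually_lt_div_of_mul_deriv_le {b c : ℝ} (hg : Tendsto g atTop atTop)
    (hf : ∀ᶠ t in atTop, HasDerivAt f (f' t) t) (hg' : ∀ᶠ t in atTop, HasDerivAt g (g' t) t)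
    (hfg : ∀ᶠ t in atTop, c * g' t ≤ f' t) (hbc : b < c) :
    ∀ᶠ t in atTop, b < f t / g t := by
  obtain ⟨T, hT⟩ := eventually_atTop.1 (hf.and (hg'.and hfg))
  have hderiv : ∀ t ∈ Ici T, HasDerivAt (fun t => f t - c * g t) (f' t - c * g' t) t :=
    fun t ht => (hT t ht).1.sub ((hT t ht).2.1.const_mul c)
  have hmono : MonotoneOn (fun t => f t - c * g t) (Ici T) := by
    refine monotoneOn_of_hasDerivWithinAt_nonneg (f' := fun t => f' t - c * g' t) (convex_Ici T)
      (fun t ht => (hderiv t ht).continuousAt.continuousWithinAt) (fun t ht => ?_) (fun t ht => ?_)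
    · rw [interior_Ici] at ht ⊢
      exact (hderiv t (Ioi_subset_Ici_self ht)).hasDerivWithinAt
    · rw [interior_Ici] at ht
      linarith [(hT t (Ioi_subset_Ici_self ht)).2.2]
  have hlim : Tendsto (fun t => c + (f T - c * g T) / g t) atTop (𝓝 c) := by
    simpa using tendsto_const_nhds.add (tendsto_const_nhds.div_atTop hg)
  filter_upwards [eventually_ge_atTop T, hg.eventually_gt_atTop 0,
    hlim.eventually_const_lt hbc] with t hTt hgt hb
  calc b < c + (f T - c * g T) / g t := hb
    _ ≤ f t / g t := by
      rw [le_div_iff₀ hgt, add_mul, div_mul_cancel₀ _ hgt.ne']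
      linarith [hmono self_mem_Ici hTt hTt]

lemma tendsto_div_of_tendsto_deriv_div_atTop {c : ℝ} (hg : Tendsto g atTop atTop)
    (hf : ∀ᶠ t in atTop, HasDerivAt f (f' t) t) (hg' : ∀ᶠ t in atTop, HasDerivAt g (g' t) t)
    (hg'_pos : ∀ᶠ t in atTop, 0 < g' t) (hlim : Tendsto (fun t => f' t / g' t) atTop (𝓝 c)) :
    Tendsto (fun t => f t / g t) atTop (𝓝 c) := by
  rw [tendsto_order]
  constructor
  · intro b hb
    obtain ⟨c', hbc', hc'c⟩ := exists_between hb
    refine eventually_lt_div_of_mul_deriv_le hg hf hg' ?_ hbc'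
    filter_upwards [hg'_pos, hlim.eventually_const_lt hc'c] with t hpos hlt
    exact ((lt_div_iff₀ hpos).1 hlt).le
  · intro b hb
    obtain ⟨c', hcc', hc'b⟩ := exists_between hb
    have hneg : ∀ᶠ t in atTop, -c' * g' t ≤ -f' t := by
      filter_upwards [hg'_pos, hlim.eventually_lt_const hcc'] with t hpos hlt
      linarith [(div_lt_iff₀ hpos).1 hlt]
    filter_upwards [eventually_lt_div_of_mul_deriv_le hg (hf.mono fun t ht => ht.neg) hg' hneg
      (neg_lt_neg hc'b)] with t ht
    rw [Pi.neg_apply, neg_div] at ht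
    linarith

lemma tendsto_div_id_of_tendsto_deriv {c : ℝ} (hf : ∀ᶠ t in atTop, HasDerivAt f (f' t) t)
    (hlim : Tendsto f' atTop (𝓝 c)) : Tendsto (fun t => f t / t) atTop (𝓝 c) :=
  tendsto_div_of_tendsto_deriv_div_atTop tendsto_id hf (Eventually.of_forall hasDerivAt_id)
    (Eventually.of_forall fun _ => one_pos) (by simpa using hlim)

lemma tendsto_atTop_of_le_deriv {c : ℝ} (hc : 0 < c) (hf : ∀ᶠ t in atTop, HasDerivAt f (f' t) t)
    (hf' : ∀ᶠ t in atTop, c ≤ f' t) : Tendsto f atTop atTop := by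
  have hlower := eventually_lt_div_of_mul_deriv_le (g' := fun _ => 1) tendsto_id hf
    (Eventually.of_forall fun t => hasDerivAt_id t) (by simpa using hf') (half_lt_self hc)
  refine tendsto_atTop_mono' atTop ?_ (tendsto_id.const_mul_atTop (half_pos hc))
  filter_upwards [hlower, eventually_gt_atTop 0] with t ht htpos
  exact ((lt_div_iff₀ htpos).1 ht).le

lemma tendsto_atTop_of_le_second_deriv {I v w : ℝ → ℝ} {c : ℝ} (hc : 0 < c)
    (hI : ∀ᶠ t in atTop, HasDerivAt I (2 * v t) t) (hv : ∀ᶠ t in atTop, HasDerivAt v (w t) t)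
    (hw : ∀ᶠ t in atTop, c ≤ w t) : Tendsto I atTop atTop := by
  refine tendsto_atTop_of_le_deriv one_pos hI ?_
  filter_upwards [(tendsto_atTop_of_le_deriv hc hv hw).eventually_ge_atTop 1] with t ht
  linarith

lemma tendsto_radial_of_tendsto_div_id {r v : ℝ → ℝ} {c : ℝ} (hc : 0 < c)
    (hr_nonneg : ∀ᶠ t in atTop, 0 ≤ r t) (hr : ∀ᶠ t in atTop, HasDerivAt r (v t / r t) t)
    (hI : ∀ᶠ t in atTop, HasDerivAt (fun u => r u ^ 2) (2 * v t) t)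
    (hv : Tendsto (fun t => v t / t) atTop (𝓝 c)) :
    Tendsto (fun t => r t / t) atTop (𝓝 √c) ∧ Tendsto (deriv r) atTop (𝓝 √c) ∧
      Tendsto (fun t => deriv (fun u => r u ^ 2) t / (2 * t)) atTop (𝓝 c) := by
  have hI_div : Tendsto (fun t => r t ^ 2 / t ^ 2) atTop (𝓝 c) := by
    refine tendsto_div_of_tendsto_deriv_div_atTop (tendsto_pow_atTop two_ne_zero) hI
      (g' := fun t => 2 * t) (Eventually.of_forall fun t => by simpa using hasDerivAt_pow 2 t)
      (eventually_gt_atTop 0 |>.mono fun t ht => by positivity)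
      (hv.congr fun t => (mul_div_mul_left _ _ two_ne_zero).symm)
  have hr_div : Tendsto (fun t => r t / t) atTop (𝓝 √c) := by
    refine hI_div.sqrt.congr' ?_
    filter_upwards [hr_nonneg, eventually_gt_atTop 0] with t hrt ht
    rw [← div_pow, sqrt_sq (div_nonneg hrt ht.le)]
  refine ⟨hr_div, ?_, ?_⟩
  · have hratio := hv.div hr_div (by positivity)
    rw [div_sqrt] at hratio
    refine hratio.congr' ?_
    filter_upwards [hr, eventually_gt_atTop 0] with t hr_t ht
    rw [hr_t.deriv, Pi.div_apply, div_div_div_cancel_right₀ ht.ne']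
  · refine hv.congr' ?_
    filter_upwards [hI] with t hIt
    rw [hIt.deriv, mul_div_mul_left _ _ two_ne_zero]

end RealCalculus

section Homogeneous

variable {E : Type*} [NormedAddCommGroup E] {U : E → ℝ} {p : ℝ}

section NormedSpace

variable [NormedSpace ℝ E]

lemma apply_smul_of_homogeneous (hU : ∀ y : E, y ≠ 0 → U y = ‖y‖ ^ p * U (‖y‖⁻¹ • y))
    {y : E} (hy : y ≠ 0) {s : ℝ} (hs : 0 < s) : U (s • y) = s ^ p * U y := by
  have hnorm : ‖s • y‖ = s * ‖y‖ := by rw [norm_smul, norm_of_nonneg hs.le]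
  have hdir : ‖s • y‖⁻¹ • s • y = ‖y‖⁻¹ • y := by
    rw [hnorm, smul_smul]
    congr 1
    field_simp
  rw [hU _ (smul_ne_zero hs.ne' hy), hdir, hnorm, mul_rpow hs.le (norm_nonneg y), hU y hy,
    mul_assoc]

lemma pos_of_homogeneous (hU : ∀ y : E, y ≠ 0 → U y = ‖y‖ ^ p * U (‖y‖⁻¹ • y))
    (hpos : ∀ y : E, ‖y‖ = 1 → 0 < U y) {y : E} (hy : y ≠ 0) : 0 < U y := by
  rw [hU y hy]
  exact mul_pos (rpow_pos_of_pos (norm_pos_iff.2 hy) _) (hpos _ (norm_smul_inv_norm hy))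

lemma tendsto_cobounded_of_homogeneous [ProperSpace E] (hp : p < 0)
    (hU : ∀ y : E, y ≠ 0 → U y = ‖y‖ ^ p * U (‖y‖⁻¹ • y))
    (hcont : ContinuousOn U (sphere 0 1)) : Tendsto U (cobounded E) (𝓝 0) := by
  obtain ⟨C, hC⟩ := (isCompact_sphere (0 : E) 1).exists_bound_of_continuousOn hcont
  have hdecay : Tendsto (fun y : E => C * ‖y‖ ^ p) (cobounded E) (𝓝 0) := by
    simpa using
      ((tendsto_rpow_neg_atTop (neg_pos.2 hp)).comp tendsto_norm_cobounded_atTop).const_mul C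
  refine squeeze_zero_norm' ?_ hdecay
  filter_upwards [tendsto_norm_cobounded_atTop.eventually_gt_atTop 0] with y hy
  rw [hU y (norm_pos_iff.1 hy), norm_mul, norm_of_nonneg (rpow_nonneg hy.le _), mul_comm]
  exact mul_le_mul_of_nonneg_right
    (hC _ (mem_sphere_zero_iff_norm.2 (norm_smul_inv_norm (norm_pos_iff.1 hy))))
    (rpow_nonneg hy.le _)

end NormedSpace

variable [InnerProductSpace ℝ E] [CompleteSpace E]

lemma inner_gradient_self_of_homogeneous_s4 (hU : ∀ y : E, y ≠ 0 → U y = ‖y‖ ^ p * U (‖y‖⁻¹ • y))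
    {y : E} (hy : y ≠ 0) (hd : DifferentiableAt ℝ U y) : ⟪gradient U y, y⟫_ℝ = p * U y := by
  have hray : HasDerivAt (fun s : ℝ => U (s • y)) (fderiv ℝ U y y) 1 :=
    hd.hasFDerivAt.comp_hasDerivAt_of_eq 1 (by simpa using (hasDerivAt_id (1 : ℝ)).smul_const y)
      (one_smul ℝ y).symm
  have hpow : HasDerivAt (fun s : ℝ => s ^ p * U y) (p * U y) 1 := by
    simpa using (hasDerivAt_rpow_const (p := p) (Or.inl one_ne_zero)).mul_const (U y)
  have hscale : (fun s : ℝ => U (s • y)) =ᶠ[𝓝 1] fun s => s ^ p * U y := by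
    filter_upwards [eventually_gt_nhds one_pos] with s hs using apply_smul_of_homogeneous hU hy hs
  rw [inner_gradient_left]
  exact (hray.congr_of_eventuallyEq hscale.symm).unique hpow

end Homogeneous

section Orbit

variable {E : Type*} [NormedAddCommGroup E] [InnerProductSpace ℝ E] {x x' : ℝ → E} {t : ℝ}

lemma hasDerivAt_inner_of_energy [CompleteSpace E] {U : E → ℝ} {α h : ℝ}
    (hx : HasDerivAt x (x' t) t) (hx' : HasDerivAt x' (gradient U (x t)) t)
    (heuler : ⟪gradient U (x t), x t⟫_ℝ = -α * U (x t))
    (henergy : (1/2) * ‖x' t‖ ^ 2 - U (x t) = h) :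
    HasDerivAt (fun u => ⟪x u, x' u⟫_ℝ) (2 * h + (2 - α) * U (x t)) t := by
  refine (hx.inner ℝ hx').congr_deriv ?_
  rw [real_inner_comm, heuler, real_inner_self_eq_norm_sq]
  linarith

lemma hasDerivAt_norm_of_ne_zero (hx : HasDerivAt x (x' t) t) (h0 : x t ≠ 0) :
    HasDerivAt (fun u => ‖x u‖) (⟪x t, x' t⟫_ℝ / ‖x t‖) t := by
  have hsq : (fun u => ‖x u‖) = fun u => √(‖x u‖ ^ 2) := by
    funext u
    rw [sqrt_sq (norm_nonneg _)]
  rw [hsq]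
  convert hx.norm_sq.sqrt (by positivity) using 1
  rw [sqrt_sq (norm_nonneg _), mul_div_mul_left _ _ two_ne_zero]

end Orbit

theorem radial_asymptotics_general {d : ℕ} (α h t₀ : ℝ)
    (hα : α ∈ Set.Ioo (0:ℝ) 2) (hh : 0 < h)
    (U : EuclideanSpace ℝ (Fin d) → ℝ)
    (hUhom : ∀ y : EuclideanSpace ℝ (Fin d), y ≠ 0 →
      U y = ‖y‖ ^ (-α) * U (‖y‖⁻¹ • y))
    (hUC2 : ContDiffOn ℝ 2 U {y : EuclideanSpace ℝ (Fin d) | y ≠ 0})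
    (hUpos : ∀ y : EuclideanSpace ℝ (Fin d), ‖y‖ = 1 → 0 < U y)
    (x x' : ℝ → EuclideanSpace ℝ (Fin d))
    (hx0 : ∀ t ∈ Set.Ici t₀, x t ≠ 0)
    (hx1 : ∀ t ∈ Set.Ici t₀, HasDerivAt x (x' t) t)
    (hx2 : ∀ t ∈ Set.Ici t₀, HasDerivAt x' (gradient U (x t)) t)
    (hE : ∀ t ∈ Set.Ici t₀, (1/2) * ‖x' t‖^2 - U (x t) = h) :
    Tendsto (fun t => ‖x t‖ / t) atTop (nhds (Real.sqrt (2*h))) ∧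
    Tendsto (fun t => deriv (fun u => ‖x u‖) t) atTop (nhds (Real.sqrt (2*h))) ∧
    Tendsto (fun t => deriv (fun u => ‖x u‖^2) t / (2*t)) atTop (nhds (2*h)) := by
  set v : ℝ → ℝ := fun t => ⟪x t, x' t⟫_ℝ
  have hlate : ∀ᶠ t in atTop, t ∈ Ici t₀ := eventually_ge_atTop t₀
  have hv' : ∀ᶠ t in atTop, HasDerivAt v (2 * h + (2 - α) * U (x t)) t :=
    hlate.mono fun t ht => hasDerivAt_inner_of_energy (hx1 t ht) (hx2 t ht)
      (inner_gradient_self_of_homogeneous_s4 hUhom (hx0 t ht)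
        ((hUC2.differentiableOn two_ne_zero).differentiableAt (isOpen_ne.mem_nhds (hx0 t ht))))
      (hE t ht)
  have hI' : ∀ᶠ t in atTop, HasDerivAt (fun u => ‖x u‖ ^ 2) (2 * v t) t :=
    hlate.mono fun t ht => (hx1 t ht).norm_sq
  have hI_top : Tendsto (fun t => ‖x t‖ ^ 2) atTop atTop := by
    refine tendsto_atTop_of_le_second_deriv (c := 2 * h) (by positivity) hI' hv' ?_
    filter_upwards [hlate] with t ht
    nlinarith [pos_of_homogeneous hUhom hUpos (hx0 t ht), hα.2]
  have hU_lim : Tendsto (fun t => U (x t)) atTop (𝓝 0) := by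
    refine (tendsto_cobounded_of_homogeneous (neg_neg_of_pos hα.1) hUhom
      (hUC2.continuousOn.mono fun y hy => ne_of_mem_sphere hy one_ne_zero)).comp
      (tendsto_norm_atTop_iff_cobounded.1 ?_)
    exact (tendsto_sqrt_atTop.comp hI_top).congr fun t => sqrt_sq (norm_nonneg _)
  have hv_div : Tendsto (fun t => v t / t) atTop (𝓝 (2 * h)) :=
    tendsto_div_id_of_tendsto_deriv hv'
      (by simpa using (hU_lim.const_mul (2 - α)).const_add (2 * h))
  exact tendsto_radial_of_tendsto_div_id (by positivity)
    (Eventually.of_forall fun t => norm_nonneg _)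
    (hlate.mono fun t ht => hasDerivAt_norm_of_ne_zero (hx1 t ht) (hx0 t ht)) hI' hv_div

/-- Asymptotic radial growth of a positive-energy solution of the anisotropic
Kepler problem defined for all `t ≥ t₀`:
`r(t)/t → √(2h)`, `ṙ(t) → √(2h)` and `İ(t)/(2t) → 2h` as `t → ∞`. -/
theorem radial_asymptotics {d : ℕ} (hd : 2 ≤ d) (α h t₀ : ℝ)
    (hα : α ∈ Set.Ioo (0:ℝ) 2) (hh : 0 < h)
    (U : EuclideanSpace ℝ (Fin d) → ℝ)
    (hUhom : ∀ y : EuclideanSpace ℝ (Fin d), y ≠ 0 →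
      U y = ‖y‖ ^ (-α) * U (‖y‖⁻¹ • y))
    (hUC2 : ContDiffOn ℝ 2 U {y : EuclideanSpace ℝ (Fin d) | y ≠ 0})
    (hUpos : ∀ y : EuclideanSpace ℝ (Fin d), ‖y‖ = 1 → 0 < U y)
    (x x' : ℝ → EuclideanSpace ℝ (Fin d))
    (hx0 : ∀ t ∈ Set.Ici t₀, x t ≠ 0)
    (hx1 : ∀ t ∈ Set.Ici t₀, HasDerivAt x (x' t) t)
    (hx2 : ∀ t ∈ Set.Ici t₀, HasDerivAt x' (gradient U (x t)) t)
    (hE : ∀ t ∈ Set.Ici t₀, (1/2) * ‖x' t‖^2 - U (x t) = h) :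
    Tendsto (fun t => ‖x t‖ / t) atTop (nhds (Real.sqrt (2*h))) ∧
    Tendsto (fun t => deriv (fun u => ‖x u‖) t) atTop (nhds (Real.sqrt (2*h))) ∧
    Tendsto (fun t => deriv (fun u => ‖x u‖^2) t / (2*t)) atTop (nhds (2*h)) :=
  radial_asymptotics_general α h t₀ hα hh U hUhom hUC2 hUpos x x' hx0 hx1 hx2 hE
end

section
/- Let α ∈ (0,2), κ₊ > 0, and s⁺, σ be unit vectors in ℝ^d (with a positive-definite quadratic form ‖·‖² = ⟨·, M·⟩, M = diag(m_i), m_i > 0) satisfying ⟨σ, Ms⁺⟩ ≥ 0. With U(x) = ‖x‖^{-α}, the deformation term A₂ = ∫₀^{ε^{(2+α)/2}} (U(x̄ + εσ) - U(x̄)) dt, where x̄(t) = (κ₊t)^{2/(2+α)}s⁺, satisfies A₂ ≤ -C₁ ε^{(2-α)/2} for some constant C₁ > 0 independent of ε, for all sufficiently small ε > 0. -/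
open Real Set

/-- Potential part of the local deformation of the homothetic collision arc for
the Gutzwiller potential `U(x) = (∑ mᵢ xᵢ²)^{-α/2}`: if `⟨σ, M s⁺⟩ ≥ 0`, then
`A₂(ε) = ∫₀^{ε^{(2+α)/2}} (U(x̄+εσ) - U(x̄)) dt ≤ -C₁ ε^{(2-α)/2}` for some
`C₁ > 0` and all sufficiently small `ε > 0`. -/
theorem deformation_potential_term {d : ℕ} (hd : 2 ≤ d) (α κ : ℝ)
    (hα : α ∈ Set.Ioo (0:ℝ) 2) (hκ : 0 < κ)
    (m : Fin d → ℝ) (hm : ∀ i, 0 < m i)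
    (U : EuclideanSpace ℝ (Fin d) → ℝ)
    (hU : ∀ x : EuclideanSpace ℝ (Fin d),
      U x = (∑ i, m i * (x i)^2) ^ (-(α/2)))
    (sp σ : EuclideanSpace ℝ (Fin d)) (hsp : ‖sp‖ = 1) (hσ : ‖σ‖ = 1)
    (hMpos : 0 ≤ ∑ i, m i * σ i * sp i) :
    ∃ C₁ > (0:ℝ), ∃ ε₀ > (0:ℝ), ∀ ε ∈ Set.Ioo (0:ℝ) ε₀,
      (∫ t in (0:ℝ)..(ε ^ ((2+α)/2)),
          (U ((((κ*t) ^ ((2:ℝ)/(2+α))) • sp) + ε • σ) -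
            U (((κ*t) ^ ((2:ℝ)/(2+α))) • sp)))
        ≤ -C₁ * ε ^ ((2-α)/2) := by
  obtain ⟨hα0, hα2⟩ := hα
  have h2α : (0:ℝ) < 2 + α := by linarith
  set p : ℝ := (2:ℝ)/(2+α) with hp
  clear_value p
  have hp0 : 0 < p := by rw [hp]; exact div_pos two_pos h2α
  set Qs : ℝ := ∑ i, m i * (sp i)^2 with hQsdef
  clear_value Qs
  set Qσ : ℝ := ∑ i, m i * (σ i)^2 with hQσdef
  clear_value Qσ
  set B : ℝ := ∑ i, m i * σ i * sp i with hBdef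
  clear_value B
  -- positivity of the quadratic forms
  have hvec : ∀ (v : EuclideanSpace ℝ (Fin d)), ‖v‖ = 1 → 0 < ∑ i, m i * (v i)^2 := by
    intro v hv
    have hne : v ≠ 0 := by intro h; rw [h, norm_zero] at hv; norm_num at hv
    have hex : ∃ i, v i ≠ 0 := by
      by_contra h; push_neg at h
      exact hne (by ext i; simpa using h i)
    obtain ⟨i, hi⟩ := hex
    exact Finset.sum_pos' (fun j _ => mul_nonneg (hm j).le (sq_nonneg _))
      ⟨i, Finset.mem_univ i, mul_pos (hm i) (pow_two_pos_of_ne_zero hi)⟩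
  have hQs : 0 < Qs := by rw [hQsdef]; exact hvec sp hsp
  have hQσ : 0 < Qσ := by rw [hQσdef]; exact hvec σ hσ
  -- evaluation of U along the deformed and undeformed arcs
  have hUadd : ∀ (r e : ℝ), U ((r • sp) + e • σ)
      = (r^2*Qs + 2*r*e*B + e^2*Qσ) ^ (-(α/2)) := by
    intro r e
    rw [hU]
    congr 1
    have hterm : ∀ i, m i * ((((r • sp) + e • σ : EuclideanSpace ℝ (Fin d)) i))^2
        = r^2*(m i * (sp i)^2) + 2*r*e*(m i * σ i * sp i) + e^2*(m i * (σ i)^2) := by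
      intro i
      have hx : ((r • sp) + e • σ : EuclideanSpace ℝ (Fin d)) i = r * sp i + e * σ i := by
        simp [PiLp.add_apply, PiLp.smul_apply, smul_eq_mul]
      rw [hx]; ring
    rw [Finset.sum_congr rfl (fun i _ => hterm i), Finset.sum_add_distrib,
      Finset.sum_add_distrib, ← Finset.mul_sum, ← Finset.mul_sum, ← Finset.mul_sum,
      hQsdef, hQσdef, hBdef]
  have hUsmul : ∀ (r : ℝ), U (r • sp) = (r^2*Qs) ^ (-(α/2)) := by
    intro r
    rw [hU]
    congr 1
    have hterm : ∀ i, m i * (((r • sp : EuclideanSpace ℝ (Fin d)) i))^2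
        = r^2*(m i * (sp i)^2) := by
      intro i
      have hx : ((r • sp : EuclideanSpace ℝ (Fin d)) i) = r * sp i := by
        simp [PiLp.smul_apply, smul_eq_mul]
      rw [hx]; ring
    rw [Finset.sum_congr rfl (fun i _ => hterm i), ← Finset.mul_sum, hQsdef]
  -- choice of the constant c
  set c : ℝ := min 1 ((Qσ/Qs) ^ ((2+α)/4) / κ) with hcdef
  clear_value c
  have hc0 : 0 < c := by
    rw [hcdef]
    exact lt_min one_pos (div_pos (Real.rpow_pos_of_pos (div_pos hQσ hQs) _) hκ)
  have hc1 : c ≤ 1 := by rw [hcdef]; exact min_le_left _ _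
  have hcb : (κ*c)^(p+p) * Qs ≤ Qσ := by
    have hmr : c ≤ (Qσ/Qs) ^ ((2+α)/4) / κ := by
      rw [hcdef]; exact min_le_right _ _
    have h1 : κ * c ≤ (Qσ/Qs) ^ ((2+α)/4) := by
      have : κ * c ≤ κ * ((Qσ/Qs) ^ ((2+α)/4) / κ) :=
        mul_le_mul_of_nonneg_left hmr hκ.le
      calc κ * c ≤ κ * ((Qσ/Qs) ^ ((2+α)/4) / κ) := this
        _ = (Qσ/Qs) ^ ((2+α)/4) := by field_simp
    have h2 : (κ*c)^(p+p) ≤ ((Qσ/Qs) ^ ((2+α)/4))^(p+p) :=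
      Real.rpow_le_rpow (mul_pos hκ hc0).le h1 (by linarith)
    have h3 : ((Qσ/Qs) ^ ((2+α)/4))^(p+p) = Qσ/Qs := by
      rw [← Real.rpow_mul (div_pos hQσ hQs).le,
        show (2+α)/4 * (p+p) = 1 by rw [hp]; field_simp; ring, Real.rpow_one]
    have h4 : (κ*c)^(p+p) ≤ Qσ/Qs := h3 ▸ h2
    calc (κ*c)^(p+p) * Qs ≤ (Qσ/Qs) * Qs :=
          mul_le_mul_of_nonneg_right h4 hQs.le
      _ = Qσ := div_mul_cancel₀ _ (ne_of_gt hQs)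
  -- the constants
  have h2half : (2:ℝ)^(-(α/2)) < 1 :=
    Real.rpow_lt_one_of_one_lt_of_neg one_lt_two (by linarith)
  have h2half0 : (0:ℝ) < (2:ℝ)^(-(α/2)) := Real.rpow_pos_of_pos two_pos _
  set C₂ : ℝ := (1 - 2^(-(α/2))) * Qσ^(-(α/2)) with hC2def
  clear_value C₂
  have hC2 : 0 < C₂ := by
    rw [hC2def]; exact mul_pos (by linarith) (Real.rpow_pos_of_pos hQσ _)
  refine ⟨C₂ * c, mul_pos hC2 hc0, 1, one_pos, ?_⟩
  rintro ε ⟨hε0, hε1⟩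
  set T : ℝ := ε ^ ((2+α)/2) with hTdef
  clear_value T
  have hT0 : 0 < T := by rw [hTdef]; exact Real.rpow_pos_of_pos hε0 _
  set T' : ℝ := c * T with hT'def
  clear_value T'
  have hT'0 : 0 < T' := by rw [hT'def]; exact mul_pos hc0 hT0
  have hT'T : T' ≤ T := by
    rw [hT'def]
    calc c * T ≤ 1 * T := mul_le_mul_of_nonneg_right hc1 hT0.le
      _ = T := one_mul T
  -- pointwise bounds
  have hr_nonneg : ∀ t : ℝ, 0 ≤ t → 0 ≤ (κ*t)^p :=
    fun t ht => Real.rpow_nonneg (mul_nonneg hκ.le ht) _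
  have keynp : ∀ t : ℝ, 0 < t →
      U ((((κ*t)^p) • sp) + ε • σ) - U (((κ*t)^p) • sp) ≤ 0 := by
    intro t ht0
    rw [hUadd, hUsmul]
    set r : ℝ := (κ*t)^p with hrdef
    clear_value r
    have hr0 : 0 < r := by rw [hrdef]; exact Real.rpow_pos_of_pos (mul_pos hκ ht0) _
    have hQ0 : 0 < r^2*Qs := mul_pos (pow_pos hr0 2) hQs
    have hge : r^2*Qs ≤ r^2*Qs + 2*r*ε*B + ε^2*Qσ := by
      linarith [mul_nonneg (mul_nonneg (mul_nonneg (by norm_num : (0:ℝ) ≤ 2) hr0.le) hε0.le)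
        hMpos, mul_nonneg (sq_nonneg ε) hQσ.le]
    have := Real.rpow_le_rpow_of_nonpos hQ0 hge (by linarith : -(α/2) ≤ 0)
    linarith
  have key : ∀ t : ℝ, 0 < t → t ≤ T' →
      U ((((κ*t)^p) • sp) + ε • σ) - U (((κ*t)^p) • sp) ≤ -(C₂ * ε^(-α)) := by
    intro t ht0 htT'
    rw [hUadd, hUsmul]
    set r : ℝ := (κ*t)^p with hrdef
    clear_value r
    have hkt : 0 < κ*t := mul_pos hκ ht0
    have hr0 : 0 < r := by rw [hrdef]; exact Real.rpow_pos_of_pos hkt _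
    have hQ0 : 0 < r^2*Qs := mul_pos (pow_pos hr0 2) hQs
    -- r² Qs ≤ ε² Qσ
    have hr2 : r^2 = (κ*t)^(p+p) := by rw [hrdef, sq, ← Real.rpow_add hkt]
    have hmono : (κ*t)^(p+p) ≤ (κ*T')^(p+p) :=
      Real.rpow_le_rpow hkt.le (mul_le_mul_of_nonneg_left htT' hκ.le) (by linarith)
    have hT'eval : (κ*T')^(p+p) = (κ*c)^(p+p) * ε^2 := by
      rw [hT'def, hTdef, show κ*(c*ε^((2+α)/2)) = (κ*c)*(ε^((2+α)/2)) by ring,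
        Real.mul_rpow (mul_pos hκ hc0).le (Real.rpow_nonneg hε0.le _),
        ← Real.rpow_mul hε0.le,
        show (2+α)/2 * (p+p) = (2:ℝ) by rw [hp]; field_simp; ring,
        Real.rpow_two]
    have hQ0le : r^2*Qs ≤ ε^2*Qσ := by
      have h1 : r^2 ≤ (κ*c)^(p+p) * ε^2 := by rw [hr2]; rw [hT'eval] at hmono; exact hmono
      have h2 : r^2*Qs ≤ ((κ*c)^(p+p) * ε^2) * Qs := mul_le_mul_of_nonneg_right h1 hQs.le
      have h2' : ((κ*c)^(p+p) * ε^2) * Qs = ((κ*c)^(p+p) * Qs) * ε^2 := by ring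
      have h3 : ((κ*c)^(p+p) * Qs) * ε^2 ≤ Qσ * ε^2 :=
        mul_le_mul_of_nonneg_right hcb (sq_nonneg ε)
      have h4 : Qσ * ε^2 = ε^2*Qσ := by ring
      linarith [h2' ▸ h2, h4 ▸ h3]
    have hQ1ge : 2*(r^2*Qs) ≤ r^2*Qs + 2*r*ε*B + ε^2*Qσ := by
      linarith [mul_nonneg (mul_nonneg (mul_nonneg (by norm_num : (0:ℝ) ≤ 2) hr0.le) hε0.le)
        hMpos, hQ0le]
    have h1 : (r^2*Qs + 2*r*ε*B + ε^2*Qσ) ^ (-(α/2)) ≤ (2*(r^2*Qs)) ^ (-(α/2)) :=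
      Real.rpow_le_rpow_of_nonpos (by linarith) hQ1ge (by linarith)
    have h2 : (2*(r^2*Qs)) ^ (-(α/2)) = 2^(-(α/2)) * (r^2*Qs)^(-(α/2)) :=
      Real.mul_rpow (by norm_num) hQ0.le
    have h3 : (ε^2*Qσ) ^ (-(α/2)) ≤ (r^2*Qs) ^ (-(α/2)) :=
      Real.rpow_le_rpow_of_nonpos hQ0 hQ0le (by linarith)
    have h4 : (ε^2*Qσ) ^ (-(α/2)) = ε^(-α) * Qσ^(-(α/2)) := by
      rw [Real.mul_rpow (sq_nonneg ε) hQσ.le,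
        show (ε^2 : ℝ) = ε^(2:ℝ) from (Real.rpow_two ε).symm,
        ← Real.rpow_mul hε0.le, show (2:ℝ)*(-(α/2)) = -α by ring]
    have ha0 : 0 < (r^2*Qs)^(-(α/2)) := Real.rpow_pos_of_pos hQ0 _
    rw [h4] at h3
    rw [hC2def]
    have hkey := mul_le_mul_of_nonneg_left h3
      (by linarith : (0:ℝ) ≤ 1 - 2^(-(α/2)))
    linarith [h1, h2, hkey]
  -- continuity / integrability
  have hrcont : Continuous fun t : ℝ => (κ*t)^p := by
    rw [continuous_iff_continuousAt]
    intro t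
    exact (Real.continuousAt_rpow_const (κ*t) p (Or.inr hp0.le)).comp
      ((continuous_const.mul continuous_id).continuousAt)
  have hφcont : Continuous fun t : ℝ =>
      ((κ*t)^p)^2*Qs + 2*((κ*t)^p)*ε*B + ε^2*Qσ := by
    apply Continuous.add
    apply Continuous.add
    · exact (hrcont.pow 2).mul continuous_const
    · exact (((continuous_const.mul hrcont)).mul continuous_const).mul continuous_const
    · exact continuous_const
  have hAint : IntervalIntegrable
      (fun t => U ((((κ*t)^p) • sp) + ε • σ)) MeasureTheory.volume 0 T := by
    apply ContinuousOn.intervalIntegrable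
    intro t ht
    rw [uIcc_of_le hT0.le] at ht
    have h0 : 0 ≤ (κ*t)^p := hr_nonneg t ht.1
    have hφpos : 0 < ((κ*t)^p)^2*Qs + 2*((κ*t)^p)*ε*B + ε^2*Qσ := by
      linarith [mul_nonneg (mul_nonneg (mul_nonneg (by norm_num : (0:ℝ) ≤ 2) h0) hε0.le) hMpos,
        mul_nonneg (sq_nonneg ((κ*t)^p)) hQs.le, mul_pos (pow_pos hε0 2) hQσ]
    have hCA : ContinuousAt (fun t : ℝ =>
        (((κ*t)^p)^2*Qs + 2*((κ*t)^p)*ε*B + ε^2*Qσ) ^ (-(α/2))) t :=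
      hφcont.continuousAt.rpow_const (Or.inl hφpos.ne')
    have heq : (fun t : ℝ => U ((((κ*t)^p) • sp) + ε • σ))
        = fun t : ℝ => (((κ*t)^p)^2*Qs + 2*((κ*t)^p)*ε*B + ε^2*Qσ) ^ (-(α/2)) := by
      funext t; rw [hUadd]
    rw [heq]
    exact hCA.continuousWithinAt
  set q : ℝ := (p+p)*(-(α/2)) with hqdef
  clear_value q
  have hq1 : -1 < q := by
    have hlt : 2*α/(2+α) < 1 := by rw [div_lt_one h2α]; linarith
    have : q = -(2*α/(2+α)) := by rw [hqdef, hp]; field_simp; ring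
    linarith [this ▸ (by linarith : -(1:ℝ) < -(2*α/(2+α)))]
  have hBeq : ∀ t ∈ Ioc (0:ℝ) T,
      U (((κ*t)^p) • sp) = (Qs^(-(α/2)) * κ^q) * t^q := by
    intro t ht
    rw [hUsmul]
    have hkt : 0 < κ*t := mul_pos hκ ht.1
    rw [show ((κ*t)^p)^2 = (κ*t)^(p+p) by rw [sq, ← Real.rpow_add hkt],
      Real.mul_rpow (Real.rpow_nonneg hkt.le _) hQs.le,
      ← Real.rpow_mul hkt.le, ← hqdef,
      Real.mul_rpow hκ.le ht.1.le]
    ring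
  have hBint : IntervalIntegrable (fun t => U (((κ*t)^p) • sp)) MeasureTheory.volume 0 T := by
    rw [intervalIntegrable_iff_integrableOn_Ioc_of_le hT0.le]
    refine MeasureTheory.IntegrableOn.congr_fun ?_
      (fun t ht => (hBeq t ht).symm) measurableSet_Ioc
    have h := (intervalIntegral.intervalIntegrable_rpow' hq1 (a := 0) (b := T)).const_mul
      (Qs^(-(α/2)) * κ^q)
    rwa [intervalIntegrable_iff_integrableOn_Ioc_of_le hT0.le] at h
  have hfint : IntervalIntegrable
      (fun t => U ((((κ*t)^p) • sp) + ε • σ) - U (((κ*t)^p) • sp)) MeasureTheory.volume 0 T :=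
    hAint.sub hBint
  have hfint1 : IntervalIntegrable
      (fun t => U ((((κ*t)^p) • sp) + ε • σ) - U (((κ*t)^p) • sp)) MeasureTheory.volume 0 T' :=
    hfint.mono_set (by rw [uIcc_of_le hT'0.le, uIcc_of_le hT0.le]; exact Icc_subset_Icc le_rfl hT'T)
  have hfint2 : IntervalIntegrable
      (fun t => U ((((κ*t)^p) • sp) + ε • σ) - U (((κ*t)^p) • sp)) MeasureTheory.volume T' T :=
    hfint.mono_set (by rw [uIcc_of_le hT'T, uIcc_of_le hT0.le]; exact Icc_subset_Icc hT'0.le le_rfl)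
  -- splitting the integral
  have hsplit : (∫ t in (0:ℝ)..T,
        (U ((((κ*t)^p) • sp) + ε • σ) - U (((κ*t)^p) • sp)))
      = (∫ t in (0:ℝ)..T', (U ((((κ*t)^p) • sp) + ε • σ) - U (((κ*t)^p) • sp)))
        + ∫ t in T'..T, (U ((((κ*t)^p) • sp) + ε • σ) - U (((κ*t)^p) • sp)) :=
    (intervalIntegral.integral_add_adjacent_intervals hfint1 hfint2).symm
  -- bound on [0, T']
  have h0ae : ∀ᵐ t : ℝ ∂(MeasureTheory.volume.restrict (Icc (0:ℝ) T')), t ≠ 0 := by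
    refine MeasureTheory.ae_restrict_of_ae ?_
    rw [MeasureTheory.ae_iff]
    have : {t : ℝ | ¬ t ≠ 0} = {0} := by ext t; simp
    rw [this]
    exact MeasureTheory.measure_singleton 0
  have hb1 : (∫ t in (0:ℝ)..T',
        (U ((((κ*t)^p) • sp) + ε • σ) - U (((κ*t)^p) • sp)))
      ≤ ∫ _ in (0:ℝ)..T', (-(C₂ * ε^(-α))) := by
    refine intervalIntegral.integral_mono_ae_restrict hT'0.le hfint1
      intervalIntegrable_const ?_
    filter_upwards [h0ae, MeasureTheory.ae_restrict_mem measurableSet_Icc] with t ht0 htmem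
    exact key t (lt_of_le_of_ne htmem.1 (Ne.symm ht0)) htmem.2
  have hb1' : (∫ _ in (0:ℝ)..T', (-(C₂ * ε^(-α)))) = T' * (-(C₂ * ε^(-α))) := by
    rw [intervalIntegral.integral_const]; simp
  -- bound on [T', T]
  have hb2 : (∫ t in T'..T,
        (U ((((κ*t)^p) • sp) + ε • σ) - U (((κ*t)^p) • sp))) ≤ 0 := by
    have : (∫ t in T'..T,
          (U ((((κ*t)^p) • sp) + ε • σ) - U (((κ*t)^p) • sp)))
        ≤ ∫ _ in T'..T, (0:ℝ) := by
      refine intervalIntegral.integral_mono_on hT'T hfint2 intervalIntegrable_const ?_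
      intro t ht
      exact keynp t (lt_of_lt_of_le hT'0 ht.1)
    simpa using this
  -- conclusion
  rw [hsplit]
  have hεpow : T' * (C₂ * ε^(-α)) = C₂ * c * ε ^ ((2-α)/2) := by
    rw [hT'def, hTdef]
    rw [show c * ε^((2+α)/2) * (C₂ * ε^(-α)) = C₂ * c * (ε^((2+α)/2) * ε^(-α)) by ring,
      ← Real.rpow_add hε0, show (2+α)/2 + -α = (2-α)/2 by ring]
  have : T' * (-(C₂ * ε^(-α))) = -(C₂ * c) * ε ^ ((2-α)/2) := by
    rw [show T' * (-(C₂ * ε^(-α))) = -(T' * (C₂ * ε^(-α))) by ring, hεpow]; ring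
  linarith [hb1, hb1' ▸ hb1, hb2, this ▸ (hb1'.symm ▸ hb1)]
end
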